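/- Let G(q,t,a) = 1 + a⁴q¹⁰/t² + q²t + q³t + q²t² + q³t² + q⁴t² + q⁴t³ + q⁵t³ + q⁴t⁴ + q⁵t⁴ + q⁶t⁴ + q⁶t⁵ + q⁷t⁵ + q⁶t⁶ + q⁷t⁶ + q⁸t⁸ + a³(q⁹ + q¹⁰ + q⁷/t² + q⁸/t² + q⁷/t + q⁸/t + q⁹t + q¹⁰t) + a(q² + q³ + q⁴ + q⁵ + q²/t + q³/t + 2q⁴t + 3q⁵t + q⁶t + q⁴t² + 2q⁵t² + 2q⁶t² + q⁷t² + 2q⁶t³ + 3q⁷t³ + q⁸t³ + q⁶t⁴ + 2q⁷t⁴ + q⁸t⁴ + q⁸t⁵ + q⁹t⁵ + q⁸t⁶ + q⁹t⁶) + a²(q⁵ + q⁶ + 2q⁷ + q⁸ + q⁵/t² + q⁴/t + 2q⁵/t + q⁶/t + q⁶t + 3q⁷t + 2q⁸t + q⁷t² + q⁸t² + q⁹t² + q⁸t³ + 2q⁹t³ + q¹⁰t³ + q⁹t⁴). Then G(q, 1, a) = (1 + q² + q³ + q⁴ + a(q² + q³ + q⁴ + q⁵) + a²q⁵)². -/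

import Mathlib

/-- `G = HD_{3,2}(2ω₂; q,t,a)`, the 2×2-square super-polynomial of the trefoil,
as a function of field elements. -/
def Gsquare {K : Type*} [Field K] (q t a : K) : K :=
  1 + a ^ 4 * q ^ 10 / t ^ 2 + q ^ 2 * t + q ^ 3 * t + q ^ 2 * t ^ 2 +
    q ^ 3 * t ^ 2 + q ^ 4 * t ^ 2 + q ^ 4 * t ^ 3 + q ^ 5 * t ^ 3 +
    q ^ 4 * t ^ 4 + q ^ 5 * t ^ 4 + q ^ 6 * t ^ 4 + q ^ 6 * t ^ 5 +
    q ^ 7 * t ^ 5 + q ^ 6 * t ^ 6 + q ^ 7 * t ^ 6 + q ^ 8 * t ^ 8 +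
    a ^ 3 * (q ^ 9 + q ^ 10 + q ^ 7 / t ^ 2 + q ^ 8 / t ^ 2 + q ^ 7 / t +
      q ^ 8 / t + q ^ 9 * t + q ^ 10 * t) +
    a * (q ^ 2 + q ^ 3 + q ^ 4 + q ^ 5 + q ^ 2 / t + q ^ 3 / t +
      2 * q ^ 4 * t + 3 * q ^ 5 * t + q ^ 6 * t + q ^ 4 * t ^ 2 +
      2 * q ^ 5 * t ^ 2 + 2 * q ^ 6 * t ^ 2 + q ^ 7 * t ^ 2 +
      2 * q ^ 6 * t ^ 3 + 3 * q ^ 7 * t ^ 3 + q ^ 8 * t ^ 3 +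
      q ^ 6 * t ^ 4 + 2 * q ^ 7 * t ^ 4 + q ^ 8 * t ^ 4 +
      q ^ 8 * t ^ 5 + q ^ 9 * t ^ 5 + q ^ 8 * t ^ 6 + q ^ 9 * t ^ 6) +
    a ^ 2 * (q ^ 5 + q ^ 6 + 2 * q ^ 7 + q ^ 8 + q ^ 5 / t ^ 2 + q ^ 4 / t +
      2 * q ^ 5 / t + q ^ 6 / t + q ^ 6 * t + 3 * q ^ 7 * t + 2 * q ^ 8 * t +
      q ^ 7 * t ^ 2 + q ^ 8 * t ^ 2 + q ^ 9 * t ^ 2 + q ^ 8 * t ^ 3 +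
      2 * q ^ 9 * t ^ 3 + q ^ 10 * t ^ 3 + q ^ 9 * t ^ 4)

/-- `HD_{3,2}(2ω₁; q,t,a)`, the super-polynomial of the trefoil colored by a row of length 2. -/
def Grow {K : Type*} [Field K] (q t a : K) : K :=
  1 + q ^ 2 * t + q ^ 3 * t + q ^ 4 * t ^ 2 + a * (q ^ 2 + q ^ 3 + q ^ 4 * t + q ^ 5 * t) +
    a ^ 2 * q ^ 5

theorem Grow_one {K : Type*} [Field K] (q a : K) :
    Grow q 1 a = 1 + q ^ 2 + q ^ 3 + q ^ 4 + a * (q ^ 2 + q ^ 3 + q ^ 4 + q ^ 5) + a ^ 2 * q ^ 5 := by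
  simp only [Grow, one_pow, mul_one]

theorem Gsquare_one_eq_Grow_one_sq {K : Type*} [Field K] (q a : K) :
    Gsquare q 1 a = Grow q 1 a ^ 2 := by
  simp only [Gsquare, Grow_one, one_pow, mul_one, div_one]
  ring

theorem stmt_16 :
    let q : RatFunc ℚ := RatFunc.X
    ∀ a : RatFunc ℚ,
      Gsquare q 1 a =
        (1 + q ^ 2 + q ^ 3 + q ^ 4 + a * (q ^ 2 + q ^ 3 + q ^ 4 + q ^ 5) +
          a ^ 2 * q ^ 5) ^ 2 := by
  intro q a
  rw [Gsquare_one_eq_Grow_one_sq, Grow_one]
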